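/- If x and y are disjoint, then the diameter of the approximate-diameter lower-bound graph G_{x,y} is at most 4q + 2; if x and y are not disjoint, then its diameter is at least 6q + 1. -/

import Mathlib

/-- The "backbone" vertices of the approximate-diameter lower-bound graph:
the original vertices `a i`, `ā i`, `fA h`, `tA h`, `cA`, `cA'` (= c̄_A) on
Alice's side, and `b i`, `b̄ i`, `fB h`, `tB h`, `cB`, `cB'` (= c̄_B) on Bob's side. -/
inductive ADBase (k logk : ℕ) where
  | a (i : Fin k)
  | abar (i : Fin k)
  | fA (h : Fin logk)
  | tA (h : Fin logk)
  | cA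
  | cA'
  | b (i : Fin k)
  | bbar (i : Fin k)
  | fB (h : Fin logk)
  | tB (h : Fin logk)
  | cB
  | cB'
deriving DecidableEq

/-- The fixed one-side edges that get subdivided into paths of `q` edges
(described here for Alice's side; Bob's side is symmetric):
`aBit i h` is the edge joining `a i` to its `h`-th bit-node (`fA h` if bit `h`
of `i` is `0`, else `tA h`); `aC i` joins `a i` to `cA`; `fC h` joins `fA h`
to `cA'`; `tC h` joins `tA h` to `cA'`; `cc` joins `cA` to `cA'`;
`bar i` is the path joining `a i` to `ā i`. -/
inductive SideEdge (k logk : ℕ) where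
  | aBit (i : Fin k) (h : Fin logk)
  | aC (i : Fin k)
  | fC (h : Fin logk)
  | tC (h : Fin logk)
  | cc
  | bar (i : Fin k)
deriving DecidableEq

/-- Vertices of the approximate-diameter lower-bound graph: the backbone vertices
together with the `q - 1` internal vertices of each subdivided edge on each side. -/
inductive ADVertex (k logk q : ℕ) where
  | base (v : ADBase k logk)
  | pA (e : SideEdge k logk) (t : Fin (q - 1))
  | pB (e : SideEdge k logk) (t : Fin (q - 1))
deriving DecidableEq

/-- Source endpoint of a subdivided edge on Alice's side. -/
def srcA (k logk : ℕ) : SideEdge k logk → ADBase k logk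
  | .aBit i _ => .a i
  | .aC i => .a i
  | .fC h => .fA h
  | .tC h => .tA h
  | .cc => .cA
  | .bar i => .a i

/-- Target endpoint of a subdivided edge on Alice's side. -/
def tgtA (k logk : ℕ) : SideEdge k logk → ADBase k logk
  | .aBit i h => if i.val.testBit h.val then .tA h else .fA h
  | .aC _ => .cA
  | .fC _ => .cA'
  | .tC _ => .cA'
  | .cc => .cA'
  | .bar i => .abar i

/-- Source endpoint of a subdivided edge on Bob's side. -/
def srcB (k logk : ℕ) : SideEdge k logk → ADBase k logk
  | .aBit i _ => .b i
  | .aC i => .b i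
  | .fC h => .fB h
  | .tC h => .tB h
  | .cc => .cB
  | .bar i => .b i

/-- Target endpoint of a subdivided edge on Bob's side. -/
def tgtB (k logk : ℕ) : SideEdge k logk → ADBase k logk
  | .aBit i h => if i.val.testBit h.val then .tB h else .fB h
  | .aC _ => .cB
  | .fC _ => .cB'
  | .tC _ => .cB'
  | .cc => .cB'
  | .bar i => .bbar i

/-- `pathAdj q src tgt node u v` says that `(u, v)` is (an orientation of) one of
the `q` consecutive edges of the path from `src` to `tgt` whose `q - 1` internal
vertices are `node 0, …, node (q-2)` (for `q = 1` the path is the single edge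
`(src, tgt)`). -/
def pathAdj (q : ℕ) {α : Type*} (src tgt : α) (node : Fin (q - 1) → α) (u v : α) : Prop :=
  (q = 1 ∧ u = src ∧ v = tgt) ∨
  (∃ h0 : 0 < q - 1, u = src ∧ v = node ⟨0, h0⟩) ∨
  (∃ t : Fin (q - 1), ∃ ht : t.val + 1 < q - 1, u = node t ∧ v = node ⟨t.val + 1, ht⟩) ∨
  (∃ h0 : 0 < q - 1, u = node ⟨q - 2, by omega⟩ ∧ v = tgt)

/-- Base relation generating the edges of the approximate-diameter lower-bound
graph `G_{x,y}`: the subdivided fixed edges on each side, the single cross edges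
`(fA h, tB h)`, `(tA h, fB h)` and `(cA', cB')`, and the single input edges
`(a i, cA')` present iff `x i = 0` and `(b i, cB')` present iff `y i = 0`. -/
def adRel (k logk q : ℕ) (x y : Fin k → Bool) (u v : ADVertex k logk q) : Prop :=
  (∃ e : SideEdge k logk,
    pathAdj q (ADVertex.base (srcA k logk e)) (ADVertex.base (tgtA k logk e))
      (fun t => ADVertex.pA e t) u v) ∨
  (∃ e : SideEdge k logk,
    pathAdj q (ADVertex.base (srcB k logk e)) (ADVertex.base (tgtB k logk e))
      (fun t => ADVertex.pB e t) u v) ∨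
  (∃ h : Fin logk, u = ADVertex.base (.fA h) ∧ v = ADVertex.base (.tB h)) ∨
  (∃ h : Fin logk, u = ADVertex.base (.tA h) ∧ v = ADVertex.base (.fB h)) ∨
  (u = ADVertex.base .cA' ∧ v = ADVertex.base .cB') ∨
  (∃ i : Fin k, x i = false ∧ u = ADVertex.base (.a i) ∧ v = ADVertex.base .cA') ∨
  (∃ i : Fin k, y i = false ∧ u = ADVertex.base (.b i) ∧ v = ADVertex.base .cB')

/-- The approximate-diameter lower-bound graph `G_{x,y}`. -/
def adGraph (k logk q : ℕ) (x y : Fin k → Bool) : SimpleGraph (ADVertex k logk q) :=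
  SimpleGraph.fromRel (adRel k logk q x y)

/-- `u` belongs to `A ∪ B ∪ {c̄_A, c̄_B}`. -/
def IsHub (k logk q : ℕ) (u : ADVertex k logk q) : Prop :=
  (∃ i, u = ADVertex.base (.a i)) ∨ (∃ i, u = ADVertex.base (.b i)) ∨
    u = ADVertex.base .cA' ∨ u = ADVertex.base .cB'
section Aux

open SimpleGraph

variable {k logk q : ℕ} {x y : Fin k → Bool}

/-- Chain-of-adjacencies gives a walk. -/
lemma ad_walk_of_chain {V : Type*} (G : SimpleGraph V) (vert : ℕ → V) :
    ∀ b : ℕ, (∀ p, p < b → G.Adj (vert p) (vert (p+1))) →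
      ∃ w : G.Walk (vert 0) (vert b), w.length = b := by
  intro b
  induction b with
  | zero => exact fun _ => ⟨.nil, rfl⟩
  | succ m ih =>
    intro h
    obtain ⟨w, hw⟩ := ih (fun p hp => h p (by omega))
    exact ⟨w.concat (h m (by omega)), by simp [hw]⟩

lemma ad_edist_chain {V : Type*} (G : SimpleGraph V) (vert : ℕ → V) (a b : ℕ)
    (hab : a ≤ b) (h : ∀ p, a ≤ p → p < b → G.Adj (vert p) (vert (p+1))) :
    G.edist (vert a) (vert b) ≤ (b - a : ℕ) := by
  obtain ⟨w, hw⟩ := ad_walk_of_chain G (fun p => vert (a + p)) (b - a)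
    (fun p hp => h (a + p) (by omega) (by omega))
  have hb : a + (b - a) = b := by omega
  have : G.edist (vert a) (vert (a + (b - a))) ≤ ((b - a : ℕ) : ℕ∞) := by
    calc G.edist (vert a) (vert (a + (b - a))) ≤ w.length := G.edist_le w
      _ = ((b - a : ℕ) : ℕ∞) := by rw [hw]
  rwa [hb] at this

lemma ad_etri {V : Type*} {G : SimpleGraph V} {u v w : V} {a b c : ℕ}
    (h1 : G.edist u v ≤ a) (h2 : G.edist v w ≤ b) (h3 : a + b ≤ c) :
    G.edist u w ≤ (c : ℕ) := by
  calc G.edist u w ≤ G.edist u v + G.edist v w := G.edist_triangle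
    _ ≤ (a : ℕ∞) + (b : ℕ∞) := add_le_add h1 h2
    _ = ((a + b : ℕ) : ℕ∞) := by push_cast; rfl
    _ ≤ (c : ℕ) := by exact_mod_cast h3

lemma ad_adj_edist {V : Type*} {G : SimpleGraph V} {u v : V} (h : G.Adj u v) :
    G.edist u v ≤ (1 : ℕ) := by
  simpa using G.edist_le h.toWalk

end Aux
section Paths

open SimpleGraph

variable {k logk q : ℕ} {x y : Fin k → Bool}

/-- Vertex at position `p` along the subdivided A-side edge `e`. -/
def pvertA (e : SideEdge k logk) (p : ℕ) : ADVertex k logk q :=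
  if h : 0 < p ∧ p < q then .pA e ⟨p - 1, by omega⟩
  else if p = 0 then .base (srcA k logk e) else .base (tgtA k logk e)

/-- Vertex at position `p` along the subdivided B-side edge `e`. -/
def pvertB (e : SideEdge k logk) (p : ℕ) : ADVertex k logk q :=
  if h : 0 < p ∧ p < q then .pB e ⟨p - 1, by omega⟩
  else if p = 0 then .base (srcB k logk e) else .base (tgtB k logk e)

lemma pvertA_zero (e : SideEdge k logk) : (pvertA e 0 : ADVertex k logk q) = .base (srcA k logk e) := by
  simp [pvertA]

lemma pvertA_q (hq : 1 ≤ q) (e : SideEdge k logk) :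
    (pvertA e q : ADVertex k logk q) = .base (tgtA k logk e) := by
  rw [pvertA, dif_neg (by omega), if_neg (by omega)]

lemma pvertA_mid (e : SideEdge k logk) (t : Fin (q - 1)) :
    (pvertA e (t.val + 1) : ADVertex k logk q) = .pA e t := by
  have ht := t.isLt
  rw [pvertA, dif_pos ⟨by omega, by omega⟩]
  congr 1

lemma pvertB_zero (e : SideEdge k logk) : (pvertB e 0 : ADVertex k logk q) = .base (srcB k logk e) := by
  simp [pvertB]

lemma pvertB_q (hq : 1 ≤ q) (e : SideEdge k logk) :
    (pvertB e q : ADVertex k logk q) = .base (tgtB k logk e) := by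
  rw [pvertB, dif_neg (by omega), if_neg (by omega)]

lemma pvertB_mid (e : SideEdge k logk) (t : Fin (q - 1)) :
    (pvertB e (t.val + 1) : ADVertex k logk q) = .pB e t := by
  have ht := t.isLt
  rw [pvertB, dif_pos ⟨by omega, by omega⟩]
  congr 1

lemma srcA_ne_tgtA (e : SideEdge k logk) : srcA k logk e ≠ tgtA k logk e := by
  cases e <;> simp only [srcA, tgtA] <;> (try split) <;> simp

lemma srcB_ne_tgtB (e : SideEdge k logk) : srcB k logk e ≠ tgtB k logk e := by
  cases e <;> simp only [srcB, tgtB] <;> (try split) <;> simp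

lemma adj_pvertA (e : SideEdge k logk) (p : ℕ) (hp : p < q) :
    (adGraph k logk q x y).Adj (pvertA e p) (pvertA e (p + 1)) := by
  rw [adGraph, SimpleGraph.fromRel_adj]
  constructor
  · -- distinctness
    rcases Nat.lt_or_ge (p+1) q with h1 | h1
    · rcases Nat.eq_zero_or_pos p with h0 | h0
      · subst h0
        rw [pvertA_zero, pvertA, dif_pos ⟨by omega, h1⟩]
        simp
      · rw [pvertA, pvertA, dif_pos ⟨h0, hp⟩, dif_pos ⟨by omega, h1⟩]
        simp
        omega
    · have hpq : p + 1 = q := by omega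
      rcases Nat.eq_zero_or_pos p with h0 | h0
      · subst h0
        rw [pvertA_zero, hpq, pvertA_q (by omega)]
        simp [srcA_ne_tgtA]
      · rw [pvertA, dif_pos ⟨h0, hp⟩, hpq, pvertA_q (by omega)]
        simp
  · refine Or.inl (Or.inl ⟨e, ?_⟩)
    rw [pathAdj]
    rcases Nat.lt_or_ge (p+1) q with h1 | h1
    · rcases Nat.eq_zero_or_pos p with h0 | h0
      · subst h0
        refine Or.inr (Or.inl ⟨by omega, pvertA_zero e, ?_⟩)
        rw [pvertA, dif_pos ⟨by omega, h1⟩]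
      · refine Or.inr (Or.inr (Or.inl ⟨⟨p - 1, by omega⟩, by simp; omega, ?_, ?_⟩))
        · rw [pvertA, dif_pos ⟨h0, hp⟩]
        · rw [pvertA, dif_pos ⟨by omega, h1⟩]
          congr 1
          exact Fin.ext (by simp; omega)
    · have hpq : p + 1 = q := by omega
      rcases Nat.eq_zero_or_pos p with h0 | h0
      · subst h0
        exact Or.inl ⟨by omega, pvertA_zero e, by rw [hpq, pvertA_q (by omega)]⟩
      · refine Or.inr (Or.inr (Or.inr ⟨by omega, ?_, by rw [hpq, pvertA_q (by omega)]⟩))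
        rw [pvertA, dif_pos ⟨h0, hp⟩]
        congr 1
        exact Fin.ext (by simp; omega)

lemma adj_pvertB (e : SideEdge k logk) (p : ℕ) (hp : p < q) :
    (adGraph k logk q x y).Adj (pvertB e p) (pvertB e (p + 1)) := by
  rw [adGraph, SimpleGraph.fromRel_adj]
  constructor
  · rcases Nat.lt_or_ge (p+1) q with h1 | h1
    · rcases Nat.eq_zero_or_pos p with h0 | h0
      · subst h0
        rw [pvertB_zero, pvertB, dif_pos ⟨by omega, h1⟩]
        simp
      · rw [pvertB, pvertB, dif_pos ⟨h0, hp⟩, dif_pos ⟨by omega, h1⟩]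
        simp
        omega
    · have hpq : p + 1 = q := by omega
      rcases Nat.eq_zero_or_pos p with h0 | h0
      · subst h0
        rw [pvertB_zero, hpq, pvertB_q (by omega)]
        simp [srcB_ne_tgtB]
      · rw [pvertB, dif_pos ⟨h0, hp⟩, hpq, pvertB_q (by omega)]
        simp
  · refine Or.inl (Or.inr (Or.inl ⟨e, ?_⟩))
    rw [pathAdj]
    rcases Nat.lt_or_ge (p+1) q with h1 | h1
    · rcases Nat.eq_zero_or_pos p with h0 | h0
      · subst h0
        refine Or.inr (Or.inl ⟨by omega, pvertB_zero e, ?_⟩)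
        rw [pvertB, dif_pos ⟨by omega, h1⟩]
      · refine Or.inr (Or.inr (Or.inl ⟨⟨p - 1, by omega⟩, by simp; omega, ?_, ?_⟩))
        · rw [pvertB, dif_pos ⟨h0, hp⟩]
        · rw [pvertB, dif_pos ⟨by omega, h1⟩]
          congr 1
          exact Fin.ext (by simp; omega)
    · have hpq : p + 1 = q := by omega
      rcases Nat.eq_zero_or_pos p with h0 | h0
      · subst h0
        exact Or.inl ⟨by omega, pvertB_zero e, by rw [hpq, pvertB_q (by omega)]⟩
      · refine Or.inr (Or.inr (Or.inr ⟨by omega, ?_, by rw [hpq, pvertB_q (by omega)]⟩))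
        rw [pvertB, dif_pos ⟨h0, hp⟩]
        congr 1
        exact Fin.ext (by simp; omega)

lemma edist_pvertA (x y : Fin k → Bool) (e : SideEdge k logk) (a b : ℕ) (hab : a ≤ b) (hb : b ≤ q) :
    (adGraph k logk q x y).edist (pvertA e a) (pvertA e b) ≤ ((b - a : ℕ) : ℕ∞) :=
  ad_edist_chain _ (pvertA e) a b hab (fun p _ hp2 => adj_pvertA e p (by omega))

lemma edist_pvertB (x y : Fin k → Bool) (e : SideEdge k logk) (a b : ℕ) (hab : a ≤ b) (hb : b ≤ q) :
    (adGraph k logk q x y).edist (pvertB e a) (pvertB e b) ≤ ((b - a : ℕ) : ℕ∞) :=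
  ad_edist_chain _ (pvertB e) a b hab (fun p _ hp2 => adj_pvertB e p (by omega))

end Paths
section Edges

open SimpleGraph

variable {k logk q : ℕ} {x y : Fin k → Bool}

lemma ad_adj_cross_f (x y : Fin k → Bool) (hq : 1 ≤ q) (h : Fin logk) :
    (adGraph k logk q x y).Adj (.base (.fA h)) (.base (.tB h)) := by
  rw [adGraph, SimpleGraph.fromRel_adj]
  exact ⟨by simp, Or.inl (Or.inr (Or.inr (Or.inl ⟨h, rfl, rfl⟩)))⟩

lemma ad_adj_cross_t (x y : Fin k → Bool) (hq : 1 ≤ q) (h : Fin logk) :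
    (adGraph k logk q x y).Adj (.base (.tA h)) (.base (.fB h)) := by
  rw [adGraph, SimpleGraph.fromRel_adj]
  exact ⟨by simp, Or.inl (Or.inr (Or.inr (Or.inr (Or.inl ⟨h, rfl, rfl⟩))))⟩

lemma ad_adj_cc' (x y : Fin k → Bool) :
    (adGraph k logk q x y).Adj (.base .cA') (.base .cB') := by
  rw [adGraph, SimpleGraph.fromRel_adj]
  exact ⟨by simp, Or.inl (Or.inr (Or.inr (Or.inr (Or.inr (Or.inl ⟨rfl, rfl⟩)))))⟩

lemma ad_adj_x {i : Fin k} (hx : x i = false) :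
    (adGraph k logk q x y).Adj (.base (.a i)) (.base .cA') := by
  rw [adGraph, SimpleGraph.fromRel_adj]
  exact ⟨by simp, Or.inl (Or.inr (Or.inr (Or.inr (Or.inr (Or.inr (Or.inl ⟨i, hx, rfl, rfl⟩))))))⟩

lemma ad_adj_y {i : Fin k} (hy : y i = false) :
    (adGraph k logk q x y).Adj (.base (.b i)) (.base .cB') := by
  rw [adGraph, SimpleGraph.fromRel_adj]
  exact ⟨by simp, Or.inl (Or.inr (Or.inr (Or.inr (Or.inr (Or.inr (Or.inr ⟨i, hy, rfl, rfl⟩))))))⟩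

lemma edist_src_tgtA (x y : Fin k → Bool) (hq : 1 ≤ q) (e : SideEdge k logk) :
    (adGraph k logk q x y).edist (.base (srcA k logk e)) (.base (tgtA k logk e)) ≤ (q : ℕ) := by
  have := edist_pvertA x y e 0 q (by omega) le_rfl
  rwa [pvertA_zero, pvertA_q hq, Nat.sub_zero] at this

lemma edist_src_tgtB (x y : Fin k → Bool) (hq : 1 ≤ q) (e : SideEdge k logk) :
    (adGraph k logk q x y).edist (.base (srcB k logk e)) (.base (tgtB k logk e)) ≤ (q : ℕ) := by
  have := edist_pvertB x y e 0 q (by omega) le_rfl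
  rwa [pvertB_zero, pvertB_q hq, Nat.sub_zero] at this

lemma edist_pA_src (x y : Fin k → Bool) (e : SideEdge k logk) (t : Fin (q - 1)) :
    (adGraph k logk q x y).edist (.pA e t) (.base (srcA k logk e)) ≤ (q : ℕ) := by
  have ht := t.isLt
  have := edist_pvertA (q := q) x y e 0 (t.val + 1) (by omega) (by omega)
  rw [pvertA_zero, pvertA_mid, edist_comm] at this
  exact le_trans this (by exact_mod_cast Nat.le_of_lt (by omega))

lemma edist_pA_tgt (x y : Fin k → Bool) (hq : 1 ≤ q) (e : SideEdge k logk) (t : Fin (q - 1)) :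
    (adGraph k logk q x y).edist (.pA e t) (.base (tgtA k logk e)) ≤ (q : ℕ) := by
  have ht := t.isLt
  have := edist_pvertA x y e (t.val + 1) q (by omega) le_rfl
  rw [pvertA_q hq, pvertA_mid] at this
  exact le_trans this (by exact_mod_cast Nat.sub_le _ _)

lemma edist_pB_src (x y : Fin k → Bool) (e : SideEdge k logk) (t : Fin (q - 1)) :
    (adGraph k logk q x y).edist (.pB e t) (.base (srcB k logk e)) ≤ (q : ℕ) := by
  have ht := t.isLt
  have := edist_pvertB (q := q) x y e 0 (t.val + 1) (by omega) (by omega)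
  rw [pvertB_zero, pvertB_mid, edist_comm] at this
  exact le_trans this (by exact_mod_cast Nat.le_of_lt (by omega))

lemma edist_pB_tgt (x y : Fin k → Bool) (hq : 1 ≤ q) (e : SideEdge k logk) (t : Fin (q - 1)) :
    (adGraph k logk q x y).edist (.pB e t) (.base (tgtB k logk e)) ≤ (q : ℕ) := by
  have ht := t.isLt
  have := edist_pvertB x y e (t.val + 1) q (by omega) le_rfl
  rw [pvertB_q hq, pvertB_mid] at this
  exact le_trans this (by exact_mod_cast Nat.sub_le _ _)

end Edges
section Hub

open SimpleGraph

variable {k logk q : ℕ} {x y : Fin k → Bool}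

lemma dA_bar (hq : 1 ≤ q) (i : Fin k) :
    (adGraph k logk q x y).edist (.base (.a i)) (.base (.abar i)) ≤ (q : ℕ) := by
  simpa [srcA, tgtA] using edist_src_tgtA x y hq (.bar i)

lemma dB_bar (hq : 1 ≤ q) (i : Fin k) :
    (adGraph k logk q x y).edist (.base (.b i)) (.base (.bbar i)) ≤ (q : ℕ) := by
  simpa [srcB, tgtB] using edist_src_tgtB x y hq (.bar i)

lemma dA_c (hq : 1 ≤ q) (i : Fin k) :
    (adGraph k logk q x y).edist (.base (.a i)) (.base .cA) ≤ (q : ℕ) := by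
  simpa [srcA, tgtA] using edist_src_tgtA x y hq (.aC i)

lemma dB_c (hq : 1 ≤ q) (i : Fin k) :
    (adGraph k logk q x y).edist (.base (.b i)) (.base .cB) ≤ (q : ℕ) := by
  simpa [srcB, tgtB] using edist_src_tgtB x y hq (.aC i)

lemma dA_cc (hq : 1 ≤ q) :
    (adGraph k logk q x y).edist (.base .cA) (.base .cA') ≤ (q : ℕ) := by
  simpa [srcA, tgtA] using edist_src_tgtA x y hq .cc

lemma dB_cc (hq : 1 ≤ q) :
    (adGraph k logk q x y).edist (.base .cB) (.base .cB') ≤ (q : ℕ) := by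
  simpa [srcB, tgtB] using edist_src_tgtB x y hq .cc

lemma dA_f (hq : 1 ≤ q) (h : Fin logk) :
    (adGraph k logk q x y).edist (.base (.fA h)) (.base .cA') ≤ (q : ℕ) := by
  simpa [srcA, tgtA] using edist_src_tgtA x y hq (.fC h)

lemma dA_t (hq : 1 ≤ q) (h : Fin logk) :
    (adGraph k logk q x y).edist (.base (.tA h)) (.base .cA') ≤ (q : ℕ) := by
  simpa [srcA, tgtA] using edist_src_tgtA x y hq (.tC h)

lemma dB_f (hq : 1 ≤ q) (h : Fin logk) :
    (adGraph k logk q x y).edist (.base (.fB h)) (.base .cB') ≤ (q : ℕ) := by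
  simpa [srcB, tgtB] using edist_src_tgtB x y hq (.fC h)

lemma dB_t (hq : 1 ≤ q) (h : Fin logk) :
    (adGraph k logk q x y).edist (.base (.tB h)) (.base .cB') ≤ (q : ℕ) := by
  simpa [srcB, tgtB] using edist_src_tgtB x y hq (.tC h)

lemma dA_bit (hq : 1 ≤ q) (i : Fin k) (h : Fin logk) :
    (adGraph k logk q x y).edist (.base (.a i))
      (.base (tgtA k logk (.aBit i h))) ≤ (q : ℕ) := by
  simpa [srcA] using edist_src_tgtA x y hq (.aBit i h)

lemma dB_bit (hq : 1 ≤ q) (i : Fin k) (h : Fin logk) :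
    (adGraph k logk q x y).edist (.base (.b i))
      (.base (tgtB k logk (.aBit i h))) ≤ (q : ℕ) := by
  simpa [srcB] using edist_src_tgtB x y hq (.aBit i h)

lemma dA_ac' (hq : 1 ≤ q) (i : Fin k) :
    (adGraph k logk q x y).edist (.base (.a i)) (.base .cA') ≤ ((2 * q : ℕ) : ℕ∞) := by
  exact ad_etri (dA_c hq i) (dA_cc hq) (by omega)

lemma dB_bc' (hq : 1 ≤ q) (i : Fin k) :
    (adGraph k logk q x y).edist (.base (.b i)) (.base .cB') ≤ ((2 * q : ℕ) : ℕ∞) := by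
  exact ad_etri (dB_c hq i) (dB_cc hq) (by omega)

lemma dA_aa (hq : 1 ≤ q) (i j : Fin k) :
    (adGraph k logk q x y).edist (.base (.a i)) (.base (.a j)) ≤ ((2 * q : ℕ) : ℕ∞) := by
  have h2 : (adGraph k logk q x y).edist (.base .cA) (.base (.a j)) ≤ (q : ℕ) := by
    rw [SimpleGraph.edist_comm]; exact dA_c hq j
  exact ad_etri (dA_c hq i) h2 (by omega)

lemma dB_bb (hq : 1 ≤ q) (i j : Fin k) :
    (adGraph k logk q x y).edist (.base (.b i)) (.base (.b j)) ≤ ((2 * q : ℕ) : ℕ∞) := by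
  have h2 : (adGraph k logk q x y).edist (.base .cB) (.base (.b j)) ≤ (q : ℕ) := by
    rw [SimpleGraph.edist_comm]; exact dB_c hq j
  exact ad_etri (dB_c hq i) h2 (by omega)

/-- Distance from `a i` through bit `h` to the B-side: `a i` is within `q + 1`
of the B-side bit node opposite to its bit value. -/
lemma dA_cross (hq : 1 ≤ q) (i : Fin k) (h : Fin logk) :
    ((i : ℕ).testBit h.val = true →
      (adGraph k logk q x y).edist (.base (.a i)) (.base (.fB h)) ≤ ((q + 1 : ℕ) : ℕ∞)) ∧
    ((i : ℕ).testBit h.val = false →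
      (adGraph k logk q x y).edist (.base (.a i)) (.base (.tB h)) ≤ ((q + 1 : ℕ) : ℕ∞)) := by
  constructor
  · intro hb
    have h1 := dA_bit (x := x) (y := y) hq i h
    rw [tgtA, if_pos hb] at h1
    exact ad_etri h1 (ad_adj_edist (ad_adj_cross_t x y hq h)) le_rfl
  · intro hb
    have h1 := dA_bit (x := x) (y := y) hq i h
    rw [tgtA, if_neg (by simp [hb])] at h1
    exact ad_etri h1 (ad_adj_edist (ad_adj_cross_f x y hq h)) le_rfl

lemma dA_acB' (hq : 1 ≤ q) (hlog : 0 < logk) (i : Fin k) :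
    (adGraph k logk q x y).edist (.base (.a i)) (.base .cB') ≤ ((2 * q + 1 : ℕ) : ℕ∞) := by
  set h : Fin logk := ⟨0, hlog⟩
  by_cases hb : (i : ℕ).testBit h.val
  · exact ad_etri ((dA_cross hq i h).1 hb) (dB_f hq h) (by omega)
  · exact ad_etri ((dA_cross hq i h).2 (by simpa using hb)) (dB_t hq h) (by omega)

lemma dB_bcA' (hq : 1 ≤ q) (i : Fin k) :
    (adGraph k logk q x y).edist (.base (.b i)) (.base .cA') ≤ ((2 * q + 1 : ℕ) : ℕ∞) := by
  have h2 : (adGraph k logk q x y).edist (.base .cB') (.base .cA') ≤ (1 : ℕ) := by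
    rw [SimpleGraph.edist_comm]; exact ad_adj_edist (ad_adj_cc' x y)
  exact ad_etri (dB_bc' hq i) h2 (by omega)

lemma dA_ab_ne (hq : 1 ≤ q) (hpow : k = 2 ^ logk) {i j : Fin k} (hne : i ≠ j) :
    (adGraph k logk q x y).edist (.base (.a i)) (.base (.b j)) ≤ ((2 * q + 1 : ℕ) : ℕ∞) := by
  have hik : (i : ℕ) < 2 ^ logk := hpow ▸ i.isLt
  have hjk : (j : ℕ) < 2 ^ logk := hpow ▸ j.isLt
  have hvne : (i : ℕ) ≠ (j : ℕ) := fun hc => hne (Fin.ext hc)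
  have hbit : ∃ h < logk, (i : ℕ).testBit h ≠ (j : ℕ).testBit h := by
    by_contra hc
    push_neg at hc
    apply hvne
    apply Nat.eq_of_testBit_eq
    intro m
    by_cases hm : m < logk
    · exact hc m hm
    · rw [Nat.testBit_eq_false_of_lt, Nat.testBit_eq_false_of_lt] <;>
        exact lt_of_lt_of_le (by assumption) (Nat.pow_le_pow_right (by norm_num) (by omega))
  obtain ⟨h, hh, hdiff⟩ := hbit
  set hf : Fin logk := ⟨h, hh⟩
  have hjbit : (adGraph k logk q x y).edist (.base (tgtB k logk (.aBit j hf))) (.base (.b j)) ≤ (q : ℕ) := by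
    rw [edist_comm]
    exact dB_bit hq j hf
  by_cases hb : (i : ℕ).testBit h
  · have hjb : (j : ℕ).testBit h = false := by
      cases hjb : (j : ℕ).testBit h
      · rfl
      · exact absurd (by rw [hb, hjb]) hdiff
    rw [tgtB, if_neg (by simp [hf, hjb])] at hjbit
    exact ad_etri ((dA_cross hq i hf).1 hb) hjbit (by omega)
  · have hib : (i : ℕ).testBit h = false := by simpa using hb
    have hjb : (j : ℕ).testBit h = true := by
      cases hjb : (j : ℕ).testBit h
      · exact absurd (by rw [hib, hjb]) hdiff
      · rfl
    rw [tgtB, if_pos hjb] at hjbit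
    exact ad_etri ((dA_cross hq i hf).2 hib) hjbit (by omega)

lemma dA_ab_disj (hq : 1 ≤ q) {i : Fin k} (hd : x i = false ∨ y i = false) :
    (adGraph k logk q x y).edist (.base (.a i)) (.base (.b i)) ≤ ((2 * q + 2 : ℕ) : ℕ∞) := by
  rcases hd with hd | hd
  · have h3 : (adGraph k logk q x y).edist (.base .cB') (.base (.b i)) ≤ ((2 * q : ℕ) : ℕ∞) := by
      rw [SimpleGraph.edist_comm]; exact dB_bc' hq i
    have h2 : (adGraph k logk q x y).edist (.base .cA') (.base (.b i)) ≤ ((2 * q + 1 : ℕ) : ℕ∞) :=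
      ad_etri (ad_adj_edist (ad_adj_cc' x y)) h3 (by omega)
    exact ad_etri (ad_adj_edist (ad_adj_x hd)) h2 (by omega)
  · have h3 : (adGraph k logk q x y).edist (.base .cB') (.base (.b i)) ≤ ((1 : ℕ) : ℕ∞) := by
      rw [SimpleGraph.edist_comm]; exact ad_adj_edist (ad_adj_y hd)
    have h2 : (adGraph k logk q x y).edist (.base .cA') (.base (.b i)) ≤ ((2 : ℕ) : ℕ∞) :=
      ad_etri (ad_adj_edist (ad_adj_cc' x y)) h3 (by omega)
    exact ad_etri (dA_ac' hq i) h2 (by omega)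

end Hub
section Upper

open SimpleGraph

variable {k logk q : ℕ} {x y : Fin k → Bool}

lemma ad_weaken {V : Type*} {G : SimpleGraph V} {u v : V} {a b : ℕ}
    (h : G.edist u v ≤ (a : ℕ)) (hab : a ≤ b) : G.edist u v ≤ (b : ℕ) :=
  le_trans h (Nat.cast_le.mpr hab)

lemma ad_comm {V : Type*} {G : SimpleGraph V} {u v : V} {a : ℕ}
    (h : G.edist u v ≤ (a : ℕ)) : G.edist v u ≤ (a : ℕ) := by
  rwa [SimpleGraph.edist_comm] at h

lemma hub_hub (hq : 1 ≤ q) (hpow : k = 2 ^ logk) (hlog : 0 < logk)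
    (disj : ∀ i, x i = false ∨ y i = false) {u v : ADVertex k logk q}
    (hu : IsHub k logk q u) (hv : IsHub k logk q v) :
    (adGraph k logk q x y).edist u v ≤ ((2 * q + 2 : ℕ) : ℕ∞) := by
  rcases hu with ⟨i, rfl⟩ | ⟨i, rfl⟩ | rfl | rfl <;>
    rcases hv with ⟨j, rfl⟩ | ⟨j, rfl⟩ | rfl | rfl
  · exact ad_weaken (dA_aa hq i j) (by omega)
  · by_cases hij : i = j
    · subst hij; exact dA_ab_disj hq (disj i)
    · exact ad_weaken (dA_ab_ne hq hpow hij) (by omega)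
  · exact ad_weaken (dA_ac' hq i) (by omega)
  · exact ad_weaken (dA_acB' hq hlog i) (by omega)
  · by_cases hij : j = i
    · subst hij; exact ad_comm (dA_ab_disj hq (disj j))
    · exact ad_comm (ad_weaken (dA_ab_ne hq hpow hij) (by omega))
  · exact ad_weaken (dB_bb hq i j) (by omega)
  · exact ad_weaken (dB_bcA' hq i) (by omega)
  · exact ad_weaken (dB_bc' hq i) (by omega)
  · exact ad_comm (ad_weaken (dA_ac' hq j) (by omega))
  · exact ad_comm (ad_weaken (dB_bcA' hq j) (by omega))
  · simp
  · exact ad_weaken (ad_adj_edist (ad_adj_cc' x y)) (by omega)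
  · exact ad_comm (ad_weaken (dA_acB' hq hlog j) (by omega))
  · exact ad_comm (ad_weaken (dB_bc' hq j) (by omega))
  · exact ad_comm (ad_weaken (ad_adj_edist (ad_adj_cc' x y)) (by omega))
  · simp

lemma near_hub (hq : 1 ≤ q) (u : ADVertex k logk q) :
    ∃ v, IsHub k logk q v ∧ (adGraph k logk q x y).edist u v ≤ (q : ℕ) := by
  cases u with
  | base w =>
    cases w with
    | a i => exact ⟨.base (.a i), Or.inl ⟨i, rfl⟩, by simp⟩
    | abar i => exact ⟨.base (.a i), Or.inl ⟨i, rfl⟩, ad_comm (dA_bar hq i)⟩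
    | fA h => exact ⟨.base .cA', Or.inr (Or.inr (Or.inl rfl)), dA_f hq h⟩
    | tA h => exact ⟨.base .cA', Or.inr (Or.inr (Or.inl rfl)), dA_t hq h⟩
    | cA => exact ⟨.base .cA', Or.inr (Or.inr (Or.inl rfl)), dA_cc hq⟩
    | cA' => exact ⟨.base .cA', Or.inr (Or.inr (Or.inl rfl)), by simp⟩
    | b i => exact ⟨.base (.b i), Or.inr (Or.inl ⟨i, rfl⟩), by simp⟩
    | bbar i => exact ⟨.base (.b i), Or.inr (Or.inl ⟨i, rfl⟩), ad_comm (dB_bar hq i)⟩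
    | fB h => exact ⟨.base .cB', Or.inr (Or.inr (Or.inr rfl)), dB_f hq h⟩
    | tB h => exact ⟨.base .cB', Or.inr (Or.inr (Or.inr rfl)), dB_t hq h⟩
    | cB => exact ⟨.base .cB', Or.inr (Or.inr (Or.inr rfl)), dB_cc hq⟩
    | cB' => exact ⟨.base .cB', Or.inr (Or.inr (Or.inr rfl)), by simp⟩
  | pA e t =>
    cases e with
    | aBit i h =>
      exact ⟨.base (.a i), Or.inl ⟨i, rfl⟩, by simpa [srcA] using edist_pA_src x y (.aBit i h) t⟩
    | aC i =>
      exact ⟨.base (.a i), Or.inl ⟨i, rfl⟩, by simpa [srcA] using edist_pA_src x y (.aC i) t⟩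
    | bar i =>
      exact ⟨.base (.a i), Or.inl ⟨i, rfl⟩, by simpa [srcA] using edist_pA_src x y (.bar i) t⟩
    | fC h =>
      exact ⟨.base .cA', Or.inr (Or.inr (Or.inl rfl)),
        by simpa [tgtA] using edist_pA_tgt x y hq (.fC h) t⟩
    | tC h =>
      exact ⟨.base .cA', Or.inr (Or.inr (Or.inl rfl)),
        by simpa [tgtA] using edist_pA_tgt x y hq (.tC h) t⟩
    | cc =>
      exact ⟨.base .cA', Or.inr (Or.inr (Or.inl rfl)),
        by simpa [tgtA] using edist_pA_tgt x y hq .cc t⟩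
  | pB e t =>
    cases e with
    | aBit i h =>
      exact ⟨.base (.b i), Or.inr (Or.inl ⟨i, rfl⟩), by simpa [srcB] using edist_pB_src x y (.aBit i h) t⟩
    | aC i =>
      exact ⟨.base (.b i), Or.inr (Or.inl ⟨i, rfl⟩), by simpa [srcB] using edist_pB_src x y (.aC i) t⟩
    | bar i =>
      exact ⟨.base (.b i), Or.inr (Or.inl ⟨i, rfl⟩), by simpa [srcB] using edist_pB_src x y (.bar i) t⟩
    | fC h =>
      exact ⟨.base .cB', Or.inr (Or.inr (Or.inr rfl)),
        by simpa [tgtB] using edist_pB_tgt x y hq (.fC h) t⟩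
    | tC h =>
      exact ⟨.base .cB', Or.inr (Or.inr (Or.inr rfl)),
        by simpa [tgtB] using edist_pB_tgt x y hq (.tC h) t⟩
    | cc =>
      exact ⟨.base .cB', Or.inr (Or.inr (Or.inr rfl)),
        by simpa [tgtB] using edist_pB_tgt x y hq .cc t⟩

lemma ad_upper (hk : 2 ≤ k) (hpow : k = 2 ^ logk) (hq : 1 ≤ q)
    (hdisj : ¬∃ i : Fin k, x i = true ∧ y i = true) :
    (adGraph k logk q x y).ediam ≤ ((4 * q + 2 : ℕ) : ℕ∞) := by
  have hlog : 0 < logk := by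
    rcases Nat.eq_zero_or_pos logk with h0 | h0
    · subst h0; simp at hpow; omega
    · exact h0
  have disj : ∀ i, x i = false ∨ y i = false := by
    intro i
    cases hx : x i
    · exact Or.inl rfl
    · cases hy : y i
      · exact Or.inr rfl
      · exact absurd ⟨i, hx, hy⟩ hdisj
  apply SimpleGraph.ediam_le_of_edist_le
  intro u v
  obtain ⟨hu, hhu, hdu⟩ := near_hub (x := x) (y := y) hq u
  obtain ⟨hv, hhv, hdv⟩ := near_hub (x := x) (y := y) hq v
  have h1 : (adGraph k logk q x y).edist u hv ≤ ((3 * q + 2 : ℕ) : ℕ∞) :=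
    ad_etri hdu (hub_hub hq hpow hlog disj hhu hhv) (by omega)
  exact ad_etri h1 (ad_comm hdv) (by omega)

end Upper
section Lower

open SimpleGraph

variable {k logk q : ℕ} {x y : Fin k → Bool}

/-- Potential function on backbone vertices: distance from `ā i` in the graph
where every optional edge except those at index `i` is present. -/
def lbFBase (k logk : ℕ) (i : Fin k) (q : ℕ) : ADBase k logk → ℕ
  | .a j => if j = i then q else 3 * q
  | .abar j => if j = i then 0 else 4 * q
  | .fA h => if (i : ℕ).testBit h.val then 4 * q else 2 * q
  | .tA h => if (i : ℕ).testBit h.val then 2 * q else 4 * q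
  | .cA => 2 * q
  | .cA' => 3 * q
  | .b j => if j = i then 5 * q + 1 else 3 * q + 1
  | .bbar j => if j = i then 6 * q + 1 else 4 * q + 1
  | .fB h => if (i : ℕ).testBit h.val then 2 * q + 1 else 4 * q + 1
  | .tB h => if (i : ℕ).testBit h.val then 4 * q + 1 else 2 * q + 1
  | .cB => 4 * q + 1
  | .cB' => 3 * q + 1

/-- Potential function on all vertices. -/
def lbF (k logk q : ℕ) (i : Fin k) : ADVertex k logk q → ℕ
  | .base v => lbFBase k logk i q v
  | .pA e t => min (lbFBase k logk i q (srcA k logk e) + (t.val + 1))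
      (lbFBase k logk i q (tgtA k logk e) + (q - (t.val + 1)))
  | .pB e t => min (lbFBase k logk i q (srcB k logk e) + (t.val + 1))
      (lbFBase k logk i q (tgtB k logk e) + (q - (t.val + 1)))

lemma lbF_diffA (i : Fin k) (e : SideEdge k logk) :
    lbFBase k logk i q (srcA k logk e) ≤ lbFBase k logk i q (tgtA k logk e) + q ∧
    lbFBase k logk i q (tgtA k logk e) ≤ lbFBase k logk i q (srcA k logk e) + q := by
  cases e <;> simp only [srcA, tgtA] <;> (try split_ifs) <;> simp only [lbFBase] <;>
    (try split_ifs) <;> (try omega) <;> (try simp only [lbFBase]) <;> (try split_ifs) <;> (try simp_all) <;> omega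

lemma lbF_diffB (i : Fin k) (e : SideEdge k logk) :
    lbFBase k logk i q (srcB k logk e) ≤ lbFBase k logk i q (tgtB k logk e) + q ∧
    lbFBase k logk i q (tgtB k logk e) ≤ lbFBase k logk i q (srcB k logk e) + q := by
  cases e <;> simp only [srcB, tgtB] <;> (try split_ifs) <;> simp only [lbFBase] <;>
    (try split_ifs) <;> (try omega) <;> (try simp only [lbFBase]) <;> (try split_ifs) <;> (try simp_all) <;> omega

lemma lbF_lip (i : Fin k) (hx : x i = true) (hy : y i = true)
    {u v : ADVertex k logk q} (h : adRel k logk q x y u v) :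
    lbF k logk q i v ≤ lbF k logk q i u + 1 ∧ lbF k logk q i u ≤ lbF k logk q i v + 1 := by
  rcases h with ⟨e, hp⟩ | ⟨e, hp⟩ | ⟨h, rfl, rfl⟩ | ⟨h, rfl, rfl⟩ | ⟨rfl, rfl⟩ |
    ⟨j, hj, rfl, rfl⟩ | ⟨j, hj, rfl, rfl⟩
  · obtain ⟨hd1, hd2⟩ := lbF_diffA (q := q) i e
    rcases hp with ⟨hq1, rfl, rfl⟩ | ⟨h0, rfl, rfl⟩ | ⟨t, ht, rfl, rfl⟩ | ⟨h0, rfl, rfl⟩ <;>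
      simp only [lbF] <;> omega
  · obtain ⟨hd1, hd2⟩ := lbF_diffB (q := q) i e
    rcases hp with ⟨hq1, rfl, rfl⟩ | ⟨h0, rfl, rfl⟩ | ⟨t, ht, rfl, rfl⟩ | ⟨h0, rfl, rfl⟩ <;>
      simp only [lbF] <;> omega
  · simp only [lbF, lbFBase]; split_ifs <;> omega
  · simp only [lbF, lbFBase]; split_ifs <;> omega
  · simp only [lbF, lbFBase]; omega
  · have hne : j ≠ i := fun hc => by rw [hc, hx] at hj; exact Bool.false_ne_true hj.symm
    simp only [lbF, lbFBase, if_neg hne]; omega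
  · have hne : j ≠ i := fun hc => by rw [hc, hy] at hj; exact Bool.false_ne_true hj.symm
    simp only [lbF, lbFBase, if_neg hne]; omega

lemma lbF_walk (i : Fin k) (hx : x i = true) (hy : y i = true)
    {u v : ADVertex k logk q} (w : (adGraph k logk q x y).Walk u v) :
    lbF k logk q i v ≤ lbF k logk q i u + w.length := by
  induction w with
  | nil => simp
  | @cons u' b' v' h w ih =>
    rw [adGraph, SimpleGraph.fromRel_adj] at h
    obtain ⟨-, h'⟩ := h
    have hstep : lbF k logk q i b' ≤ lbF k logk q i u' + 1 := by
      rcases h' with h' | h'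
      · exact (lbF_lip i hx hy h').1
      · exact (lbF_lip i hx hy h').2
    rw [SimpleGraph.Walk.length_cons]
    omega

lemma ad_lower (hq : 1 ≤ q) (hinter : ∃ i : Fin k, x i = true ∧ y i = true) :
    ((6 * q + 1 : ℕ) : ℕ∞) ≤ (adGraph k logk q x y).ediam := by
  obtain ⟨i, hx, hy⟩ := hinter
  refine le_trans ?_ (SimpleGraph.edist_le_ediam
    (u := ADVertex.base (.abar i)) (v := ADVertex.base (.bbar i)))
  rw [SimpleGraph.edist_eq_sInf]
  refine le_sInf ?_
  rintro b ⟨w, rfl⟩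
  have hw := lbF_walk i hx hy w
  have h1 : lbF k logk q i (ADVertex.base (.abar i)) = 0 := by simp [lbF, lbFBase]
  have h2 : lbF k logk q i (ADVertex.base (.bbar i)) = 6 * q + 1 := by simp [lbF, lbFBase]
  rw [h1, h2] at hw
  simpa using Nat.cast_le (α := ℕ∞) |>.mpr (show 6 * q + 1 ≤ w.length by omega)

end Lower
/-- if `x` and `y` are disjoint then the diameter of the
approximate-diameter lower-bound graph `G_{x,y}` (the maximum over all pairs of
nodes of their hop distance, as an extended natural number) is at most `4q + 2`;
if `x` and `y` are not disjoint then it is at least `6q + 1`. -/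
theorem adGraph_diam (k logk q : ℕ) (hk : 2 ≤ k) (hpow : k = 2 ^ logk)
    (hq : 1 ≤ q) (x y : Fin k → Bool) :
    ((¬ ∃ i : Fin k, x i = true ∧ y i = true) →
      (adGraph k logk q x y).ediam ≤ (4 * q + 2 : ℕ)) ∧
    ((∃ i : Fin k, x i = true ∧ y i = true) →
      (6 * q + 1 : ℕ) ≤ (adGraph k logk q x y).ediam) := by
  constructor
  · intro hdisj
    exact ad_upper hk hpow hq hdisj
  · intro hint
    exact ad_lower hq hint
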